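/- arXiv:2512.21731 — 3 statements merged into one kernel-verified Lean document; each statement's English description precedes it below -/
import Mathlib

section
/- Monotonicity of finite-horizon stochastic dynamic-programming value functions with exogenous noise (Proposition 4.4 in expectation form): Suppose that for all states s, s' with s ≼ s' we have D(s) ⊆ D(s'), and that for every t ∈ {1,…,T}, every pair of states s ≼ s', every decision d ∈ D(s) and every noise realization w ∈ W we have f(s,d,w) ≼ f(s',d,w) and c(t,s,d) ≤ c(t,s',d). Then for every t ∈ {1,…,T+1} and all states s ≼ s', it holds that V_t(s) ≤ V_t(s'). -/
/-- Monotonicity of finite-horizon stochastic dynamic-programming value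
functions with exogenous noise (Proposition 4.4 in expectation form). -/
theorem dp_value_monotone_stochastic
    {S : Type*} {Δ : Type*} {W : Type*} [Preorder S] [Fintype W]
    (p : W → ℝ) (hp_nonneg : ∀ w, 0 ≤ p w) (hp_sum : ∑ w, p w = 1)
    (T : ℕ) (D : S → Finset Δ) (hD : ∀ s, (D s).Nonempty)
    (f : S → Δ → W → S) (c : ℕ → S → Δ → ℝ)
    (V : ℕ → S → ℝ)
    (hVend : ∀ s, V (T + 1) s = 0)
    (hVrec : ∀ t, 1 ≤ t → t ≤ T → ∀ s,
      V t s = (D s).sup' (hD s)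
        (fun d => c t s d + ∑ w, p w * V (t + 1) (f s d w)))
    (hDmono : ∀ s s', s ≤ s' → D s ⊆ D s')
    (hf : ∀ t, 1 ≤ t → t ≤ T → ∀ s s', s ≤ s' → ∀ d ∈ D s, ∀ w : W,
      f s d w ≤ f s' d w)
    (hc : ∀ t, 1 ≤ t → t ≤ T → ∀ s s', s ≤ s' → ∀ d ∈ D s, c t s d ≤ c t s' d) :
    ∀ t, 1 ≤ t → t ≤ T + 1 → ∀ s s', s ≤ s' → V t s ≤ V t s' := by
  suffices h : ∀ k t, t + k = T + 1 → 1 ≤ t → ∀ s s', s ≤ s' → V t s ≤ V t s' by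
    intro t ht1 ht2 s s' hss
    exact h (T + 1 - t) t (by omega) ht1 s s' hss
  intro k
  induction k with
  | zero =>
    intro t ht hst s s' hss
    have : t = T + 1 := by omega
    subst this
    rw [hVend, hVend]
  | succ k ih =>
    intro t ht h1 s s' hss
    have htT : t ≤ T := by omega
    rw [hVrec t h1 htT s, hVrec t h1 htT s']
    apply Finset.sup'_le
    intro d hd
    have hd' : d ∈ D s' := hDmono s s' hss hd
    refine le_trans ?_ (Finset.le_sup' _ hd')
    have hcle := hc t h1 htT s s' hss d hd
    have hsum : ∑ w, p w * V (t + 1) (f s d w) ≤ ∑ w, p w * V (t + 1) (f s' d w) := by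
      apply Finset.sum_le_sum
      intro w _
      exact mul_le_mul_of_nonneg_left
        (ih (t + 1) (by omega) (by omega) _ _ (hf t h1 htT s s' hss d hd w))
        (hp_nonneg w)
    linarith
end

section
/- Dominated decisions can be removed from an optimal assignment (group version used in the proof of Proposition 4.5): Let P, Q ⊆ ι be finite sets of indices and let q : ι → ι be a dominator map such that for every p ∈ P \ Q we have q(p) ∈ Q, q(p) ≠ p, and c(p) ≤ c(q(p)). Suppose that for every x ∈ X and every p ∈ P \ Q the transferred vector T_{p→q(p)}(x), defined by T_{p→q(p)}(x)(p) = 0, T_{p→q(p)}(x)(q(p)) = x(q(p)) + x(p), and T_{p→q(p)}(x)(k) = x(k) for all other k, again belongs to X. If there exists x* ∈ X maximizing φ over X, then there exists y ∈ X maximizing φ over X such that y(p) = 0 for every p ∈ P \ Q. -/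
/-- Dominated decisions can be removed from an optimal assignment
(group version used in the proof of Proposition 4.5). -/
theorem dominated_decisions_removable
    {ι : Type*} [Fintype ι] [DecidableEq ι]
    (c : ι → ℝ)
    (X : Set (ι → ℝ)) (hX_nonneg : ∀ x ∈ X, ∀ k, 0 ≤ x k)
    (P Q : Finset ι) (q : ι → ι)
    (hq : ∀ p ∈ P \ Q, q p ∈ Q ∧ q p ≠ p ∧ c p ≤ c (q p))
    (hclosed : ∀ x ∈ X, ∀ p ∈ P \ Q,
      (fun k => if k = p then 0 else if k = q p then x (q p) + x p else x k) ∈ X)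
    (hmax : ∃ x ∈ X, ∀ z ∈ X, ∑ k, c k * z k ≤ ∑ k, c k * x k) :
    ∃ y ∈ X, (∀ z ∈ X, ∑ k, c k * z k ≤ ∑ k, c k * y k) ∧
      ∀ p ∈ P \ Q, y p = 0 := by
  obtain ⟨x, hxX, hxmax⟩ := hmax
  suffices h : ∀ S : Finset ι, S ⊆ P \ Q →
      ∃ y ∈ X, (∀ z ∈ X, ∑ k, c k * z k ≤ ∑ k, c k * y k) ∧ ∀ p ∈ S, y p = 0 by
    obtain ⟨y, h1, h2, h3⟩ := h (P \ Q) le_rfl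
    exact ⟨y, h1, h2, h3⟩
  intro S
  induction S using Finset.induction_on with
  | empty => exact fun _ => ⟨x, hxX, hxmax, by simp⟩
  | @insert a S ha ih =>
    intro hsub
    have haPQ : a ∈ P \ Q := hsub (Finset.mem_insert_self a S)
    obtain ⟨y, hyX, hymax, hyz⟩ := ih ((Finset.subset_insert a S).trans hsub)
    set T : ι → ℝ := fun k => if k = a then 0 else if k = q a then y (q a) + y a else y k
      with hT
    have hTX : T ∈ X := hclosed y hyX a haPQ
    have hqa : q a ≠ a := (hq a haPQ).2.1
    have hsum : ∑ k, c k * T k = ∑ k, c k * y k + (c (q a) - c a) * y a := by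
      have h1 : ∑ k, c k * T k =
          ∑ k, (c k * y k + (if k = q a then c (q a) * y a else 0)
            - (if k = a then c a * y a else 0)) := by
        refine Finset.sum_congr rfl fun k _ => ?_
        simp only [hT]
        by_cases h1 : k = a
        · subst h1
          simp [hqa, if_neg (Ne.symm hqa)]
        · by_cases h2 : k = q a
          · subst h2
            simp [h1]
            ring
          · simp [h1, h2]
      rw [h1]
      simp [Finset.sum_add_distrib, Finset.sum_sub_distrib,
        Finset.sum_ite_eq' Finset.univ]
      ring
    have hya : 0 ≤ y a := hX_nonneg y hyX a
    have hca : c a ≤ c (q a) := (hq a haPQ).2.2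
    have hext : 0 ≤ (c (q a) - c a) * y a := mul_nonneg (by linarith) hya
    refine ⟨T, hTX, fun z hz => ?_, ?_⟩
    · have := hymax z hz
      linarith [hsum]
    · intro p hp
      rcases Finset.mem_insert.mp hp with rfl | hpS
      · simp [hT]
      · have hpa : p ≠ a := fun h => ha (h ▸ hpS)
        have hpq : p ≠ q a := by
          intro h
          have : q a ∈ Q := (hq a haPQ).1
          have := hsub (Finset.mem_insert_of_mem hpS)
          rw [Finset.mem_sdiff] at this
          exact this.2 (h ▸ ‹q a ∈ Q›)
        simp [hT, hpa, hpq, hyz p hpS]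
end

section
/- Abstract form of Proposition 4.5 (a last-destination shortest path set is sufficient for the VFA assignment problem): Suppose r : ℝ → ℝ is antitone (the detour penalty is monotonically increasing in the path duration, Definition 4.1) and g : P → ℝ satisfies: for all p, q ∈ P with e(p) = e(q) and τ(q) ≤ τ(p), g(p) ≤ g(q). Let P* ⊆ P satisfy: for every p ∈ P there exists a path sel(p) ∈ P* with sel(p) ≠ p or p ∈ P*, e(sel(p)) = e(p) and τ(sel(p)) ≤ τ(p). Embed the paths as decision variables via an injection into a finite index type ι, let the objective coefficient of path p be c(p) = F + r(τ(p)) + g(p), let the coefficients of the remaining indices of ι be arbitrary reals, and let φ(x) = ∑_{k ∈ ι} c(k) · x(k). Let X ⊆ (ι → ℝ) be a feasible set every element of which is componentwise nonnegative, and suppose X is closed under the transfers T_{p→sel(p)} for every path p ∉ P*, where T_{p→q}(x) sets coordinate p to 0, adds x(p) to coordinate q, and leaves all other coordinates unchanged. If a maximizer of φ over X exists, then there exists a maximizer y of φ over X with y(p) = 0 for every path p ∈ P \ P*. -/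
/-- Abstract form of Proposition 4.5: a last-destination shortest path set is
sufficient for the VFA assignment problem. -/
theorem ldsps_sufficient
    {V : Type*} {P : Type*} {ι : Type*} [Fintype ι] [DecidableEq ι]
    (e : P → V) (τ : P → ℝ) (F : ℝ) (r : ℝ → ℝ) (g : P → ℝ)
    (hr : Antitone r)
    (hg : ∀ p q : P, e p = e q → τ q ≤ τ p → g p ≤ g q)
    (Pstar : Set P) (sel : P → P)
    (hsel : ∀ p : P, sel p ∈ Pstar ∧ (sel p ≠ p ∨ p ∈ Pstar) ∧
      e (sel p) = e p ∧ τ (sel p) ≤ τ p)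
    (emb : P → ι) (hemb : Function.Injective emb)
    (c : ι → ℝ) (hc : ∀ p : P, c (emb p) = F + r (τ p) + g p)
    (X : Set (ι → ℝ)) (hX_nonneg : ∀ x ∈ X, ∀ k, 0 ≤ x k)
    (hclosed : ∀ x ∈ X, ∀ p : P, p ∉ Pstar →
      (fun k => if k = emb p then 0
        else if k = emb (sel p) then x (emb (sel p)) + x (emb p)
        else x k) ∈ X)
    (hmax : ∃ x ∈ X, ∀ z ∈ X, ∑ k, c k * z k ≤ ∑ k, c k * x k) :
    ∃ y ∈ X, (∀ z ∈ X, ∑ k, c k * z k ≤ ∑ k, c k * y k) ∧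
      ∀ p : P, p ∉ Pstar → y (emb p) = 0 := by
  classical
  haveI : Fintype P := Fintype.ofInjective emb hemb
  obtain ⟨x, hxX, hxmax⟩ := hmax
  suffices h : ∀ n : ℕ, ∀ y ∈ X, (∀ z ∈ X, ∑ k, c k * z k ≤ ∑ k, c k * y k) →
      (Finset.univ.filter (fun p : P => p ∉ Pstar ∧ y (emb p) ≠ 0)).card ≤ n →
      ∃ y' ∈ X, (∀ z ∈ X, ∑ k, c k * z k ≤ ∑ k, c k * y' k) ∧
        ∀ p : P, p ∉ Pstar → y' (emb p) = 0 by
    exact h _ x hxX hxmax le_rfl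
  intro n
  induction n with
  | zero =>
    intro y hy hymax hcard
    refine ⟨y, hy, hymax, ?_⟩
    intro p hp
    by_contra hne
    have hmem : p ∈ Finset.univ.filter (fun p : P => p ∉ Pstar ∧ y (emb p) ≠ 0) := by
      simp [hp, hne]
    have := Finset.card_pos.mpr ⟨p, hmem⟩
    omega
  | succ n ih =>
    intro y hy hymax hcard
    by_cases hB : (Finset.univ.filter (fun p : P => p ∉ Pstar ∧ y (emb p) ≠ 0)).Nonempty
    · obtain ⟨p, hp⟩ := hB
      rw [Finset.mem_filter] at hp
      obtain ⟨-, hp1, hp2⟩ := hp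
      obtain ⟨hs1, hs2, hs3, hs4⟩ := hsel p
      have hne : sel p ≠ p := hs2.resolve_right hp1
      have hab : emb (sel p) ≠ emb p := fun h => hne (hemb h)
      set y' : ι → ℝ := fun k => if k = emb p then 0
        else if k = emb (sel p) then y (emb (sel p)) + y (emb p)
        else y k with hy'def
      have hy'X : y' ∈ X := hclosed y hy p hp1
      have hcle : c (emb p) ≤ c (emb (sel p)) := by
        rw [hc, hc]
        have h1 : r (τ p) ≤ r (τ (sel p)) := hr hs4
        have h2 : g p ≤ g (sel p) := hg p (sel p) hs3.symm hs4
        linarith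
      have hother : ∀ k, k ≠ emb p → k ≠ emb (sel p) → y' k = y k := by
        intro k h1 h2
        simp [hy'def, h1, h2]
      have hdiff : ∑ k, (c k * y' k - c k * y k)
          = (c (emb (sel p)) - c (emb p)) * y (emb p) := by
        rw [← Finset.sum_subset (Finset.subset_univ ({emb (sel p), emb p} : Finset ι))]
        · rw [Finset.sum_pair hab]
          have h1 : y' (emb (sel p)) = y (emb (sel p)) + y (emb p) := by
            simp [hy'def, hab]
          have h2 : y' (emb p) = 0 := by simp [hy'def]
          rw [h1, h2]
          ring
        · intro k _ hk
          simp only [Finset.mem_insert, Finset.mem_singleton, not_or] at hk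
          rw [hother k hk.2 hk.1, sub_self]
      have hsum : ∑ k, c k * y' k
          = ∑ k, c k * y k + (c (emb (sel p)) - c (emb p)) * y (emb p) := by
        have := Finset.sum_sub_distrib (s := (Finset.univ : Finset ι))
          (f := fun k => c k * y' k) (g := fun k => c k * y k)
        rw [this] at hdiff
        linarith
      have hy'max : ∀ z ∈ X, ∑ k, c k * z k ≤ ∑ k, c k * y' k := by
        intro z hz
        have h1 := hymax z hz
        have h2 : 0 ≤ (c (emb (sel p)) - c (emb p)) * y (emb p) :=
          mul_nonneg (by linarith) (hX_nonneg y hy (emb p))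
        linarith [hsum]
      have hsub : Finset.univ.filter (fun q : P => q ∉ Pstar ∧ y' (emb q) ≠ 0)
          ⊆ (Finset.univ.filter (fun q : P => q ∉ Pstar ∧ y (emb q) ≠ 0)).erase p := by
        intro q hq
        rw [Finset.mem_filter] at hq
        obtain ⟨-, hq1, hq2⟩ := hq
        have hqp : q ≠ p := by
          intro h
          apply hq2
          simp [h, hy'def]
        have hqs : emb q ≠ emb (sel p) := by
          intro h
          exact hq1 (hemb h ▸ hs1)
        rw [Finset.mem_erase, Finset.mem_filter]
        refine ⟨hqp, Finset.mem_univ q, hq1, ?_⟩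
        rwa [hother (emb q) (fun h => hqp (hemb h)) hqs] at hq2
      have hcard' : (Finset.univ.filter (fun q : P => q ∉ Pstar ∧ y' (emb q) ≠ 0)).card ≤ n := by
        have h1 := Finset.card_le_card hsub
        have hpmem : p ∈ Finset.univ.filter (fun q : P => q ∉ Pstar ∧ y (emb q) ≠ 0) :=
          Finset.mem_filter.mpr ⟨Finset.mem_univ p, hp1, hp2⟩
        have h2 := Finset.card_erase_of_mem hpmem
        omega
      exact ih y' hy'X hy'max hcard'
    · refine ⟨y, hy, hymax, ?_⟩
      intro p hp
      by_contra hne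
      exact hB ⟨p, by simp [hp, hne]⟩
end
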